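/- The set H_D ⊂ S_n is a complete system of representatives of the left cosets of Stab_{S_n}({1,…,D}) (the pointwise stabilizer of 1, …, D in S_n), i.e., S_n is the disjoint union over g ∈ H_D of the cosets g⁻¹ · Stab, equivalently: for every σ ∈ S_n there exist unique g ∈ H_D and h ∈ Stab_{S_n}^{pt}(1,…,D) with σ = g⁻¹ h, where Stab_{S_n}^{pt}(1,…,D) = {h ∈ S_n : h(d) = d for d = 1,…,D}. -/

import Mathlib

/-- The equivalence between `Fin (n - i)` and the elements of `Fin n` that are `≥ i`. -/
def shiftEquiv (n i : ℕ) : Fin (n - i) ≃ {j : Fin n // i ≤ (j : ℕ)} where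
  toFun k := ⟨⟨i + k.val, by omega⟩, by simp⟩
  invFun j := ⟨(j : Fin n).val - i, by omega⟩
  left_inv k := by ext; simp
  right_inv j := by
    apply Subtype.ext
    apply Fin.ext
    have := j.2
    simp
    omega

/-- The cyclic permutation of order `n - i` on `{i+1, …, n}` (0-indexed: on the
elements of `Fin n` that are `≥ i`), fixing `{1, …, i}` pointwise.
Its powers form the cyclic group `C_{n-i}` of the paper. -/
def cyc (n i : ℕ) : Equiv.Perm (Fin n) :=
  (finRotate (n - i)).extendDomain (shiftEquiv n i)

/-- `H_D = {σ_D ⋯ σ_1 : σ_i ∈ C_{n-D+i}}`: the set of products of one element of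
each cyclic group `C_{n-D+i}` (the factor from `C_n` being applied first, then the
factor from `C_{n-1}`, …, the factor from `C_{n-D+1}` applied last). -/
def HD (n D : ℕ) : Set (Equiv.Perm (Fin n)) :=
  {g | ∃ σ : Fin D → Equiv.Perm (Fin n),
    (∀ d : Fin D, σ d ∈ Subgroup.zpowers (cyc n d.val)) ∧
      g = (List.ofFn σ).reverse.prod}

/-!
Induction on `D`, counting points from `0`. If `g₀ ∈ H_D` is the unique element with `g₀ σ`
fixing `0, …, D-1`, then `g₀ σ` maps `D` into `{D, …, n-1}`. There `C_{n-D}` acts simply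
transitively (transitively since it contains a rotation through all of it, freely since it is
abelian), while it fixes `0, …, D-1`. So exactly one `τ ∈ C_{n-D}` makes `τ g₀ σ` fix `D` as
well, and `H_{D+1} = C_{n-D} H_D`.
-/

open Equiv Equiv.Perm

lemma Equiv.Perm.apply_apply_eq_of_mem_zpowers {α : Type*} {c τ ρ : Perm α}
    (hτ : τ ∈ Subgroup.zpowers c) (hρ : ρ ∈ Subgroup.zpowers c) {x : α} (hx : τ x = x) :
    τ (ρ x) = ρ x := by
  rw [← Perm.mul_apply, setLike_mul_comm hτ hρ, Perm.mul_apply, hx]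

open Fin.NatCast in
lemma finRotate_pow_apply {m : ℕ} [NeZero m] (k : ℕ) (a : Fin m) :
    (finRotate m ^ k) a = a + (k : Fin m) := by
  induction k with
  | zero => simp
  | succ k ih => rw [pow_succ', Perm.mul_apply, ih, finRotate_apply, Nat.cast_succ, add_assoc]

lemma exists_finRotate_pow_apply_eq_zero {m : ℕ} [NeZero m] (a : Fin m) :
    ∃ k : ℕ, (finRotate m ^ k) a = 0 :=
  ⟨(-a).val, by rw [finRotate_pow_apply, Fin.cast_val_eq_self, add_neg_cancel]⟩

-- `Stab^pt(1, …, D)`, with `Fin n` standing for `{1, …, n}` shifted down by one.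
def fixingBelow (n D : ℕ) : Subgroup (Perm (Fin n)) :=
  fixingSubgroup (Perm (Fin n)) {x : Fin n | (x : ℕ) < D}

section fixingBelow

variable {n D : ℕ} {h : Perm (Fin n)}

lemma mem_fixingBelow : h ∈ fixingBelow n D ↔ ∀ x : Fin n, (x : ℕ) < D → h x = x := by
  simp [fixingBelow, mem_fixingSubgroup_iff, Perm.smul_def]

lemma mem_fixingBelow_succ (hD : D < n) :
    h ∈ fixingBelow n (D + 1) ↔ h ∈ fixingBelow n D ∧ h ⟨D, hD⟩ = ⟨D, hD⟩ := by
  simp only [mem_fixingBelow]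
  refine ⟨fun hh => ⟨fun x hx => hh x (by omega), hh _ (Nat.lt_succ_self D)⟩, ?_⟩
  rintro ⟨hh, hD'⟩ x hx
  rcases Nat.lt_succ_iff_lt_or_eq.mp hx with hx | hx
  · exact hh x hx
  · obtain rfl : x = ⟨D, hD⟩ := Fin.ext hx
    exact hD'

lemma le_apply_of_mem_fixingBelow (hh : h ∈ fixingBelow n D) {x : Fin n} (hx : D ≤ x) :
    D ≤ h x := by
  by_contra hlt
  have hhx : h x = x := h.injective (mem_fixingBelow.mp hh _ (not_le.mp hlt))
  exact hlt (hhx.symm ▸ hx)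

end fixingBelow

section cyc

variable {n i : ℕ}

lemma zpowers_cyc_le_fixingBelow : Subgroup.zpowers (cyc n i) ≤ fixingBelow n i :=
  Subgroup.zpowers_le.mpr <| mem_fixingBelow.mpr fun _ hx =>
    Perm.extendDomain_apply_not_subtype _ _ (not_le.mpr hx)

lemma exists_mem_zpowers_cyc_val_apply_eq {x : Fin n} (hx : i ≤ x) :
    ∃ τ ∈ Subgroup.zpowers (cyc n i), (τ x : ℕ) = i := by
  have : NeZero (n - i) := ⟨by omega⟩
  obtain ⟨k, hk⟩ := exists_finRotate_pow_apply_eq_zero ((shiftEquiv n i).symm ⟨x, hx⟩)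
  refine ⟨cyc n i ^ k, Subgroup.npow_mem_zpowers _ k, ?_⟩
  have hx' : x = shiftEquiv n i ((shiftEquiv n i).symm ⟨x, hx⟩) := by simp
  rw [cyc, ← extendDomain_pow, hx', extendDomain_apply_image, hk]
  simp [shiftEquiv]

lemma exists_mem_zpowers_cyc_apply_eq {x y : Fin n} (hx : i ≤ x) (hy : i ≤ y) :
    ∃ ρ ∈ Subgroup.zpowers (cyc n i), ρ x = y := by
  obtain ⟨τx, hτx, hτxx⟩ := exists_mem_zpowers_cyc_val_apply_eq hx
  obtain ⟨τy, hτy, hτyy⟩ := exists_mem_zpowers_cyc_val_apply_eq hy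
  refine ⟨τy⁻¹ * τx, mul_mem (inv_mem hτy) hτx, ?_⟩
  rw [Perm.mul_apply, Perm.inv_eq_iff_eq]
  exact Fin.ext (hτxx.trans hτyy.symm)

lemma eq_one_of_mem_zpowers_cyc {τ : Perm (Fin n)} (hτ : τ ∈ Subgroup.zpowers (cyc n i))
    {x : Fin n} (hx : i ≤ x) (hτx : τ x = x) : τ = 1 := by
  refine Perm.ext fun y => ?_
  rcases lt_or_ge (y : ℕ) i with hy | hy
  · exact mem_fixingBelow.mp (zpowers_cyc_le_fixingBelow hτ) y hy
  · obtain ⟨ρ, hρ, rfl⟩ := exists_mem_zpowers_cyc_apply_eq hx hy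
    exact apply_apply_eq_of_mem_zpowers hτ hρ hτx

lemma eq_of_mem_zpowers_cyc_of_apply_eq {τ τ' : Perm (Fin n)}
    (hτ : τ ∈ Subgroup.zpowers (cyc n i)) (hτ' : τ' ∈ Subgroup.zpowers (cyc n i))
    {x : Fin n} (hx : i ≤ x) (h : τ x = τ' x) : τ = τ' :=
  (inv_mul_eq_one.mp (eq_one_of_mem_zpowers_cyc (mul_mem (inv_mem hτ') hτ) hx
    (by simp [Perm.mul_apply, h]))).symm

end cyc

lemma mem_HD_zero {n : ℕ} {g : Perm (Fin n)} : g ∈ HD n 0 ↔ g = 1 := by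
  constructor
  · rintro ⟨σ, -, rfl⟩
    simp
  · rintro rfl
    exact ⟨Fin.elim0, fun d => d.elim0, by simp⟩

lemma mem_HD_succ {n D : ℕ} {g : Perm (Fin n)} :
    g ∈ HD n (D + 1) ↔
      ∃ τ ∈ Subgroup.zpowers (cyc n D), ∃ g₀ ∈ HD n D, g = τ * g₀ := by
  constructor
  · rintro ⟨σ, hσ, rfl⟩
    refine ⟨σ (Fin.last D), by simpa using hσ (Fin.last D),
      (List.ofFn fun i => σ i.castSucc).reverse.prod,
      ⟨fun i => σ i.castSucc, fun d => by simpa using hσ d.castSucc, rfl⟩, ?_⟩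
    rw [List.ofFn_succ']
    simp [List.concat_eq_append]
  · rintro ⟨τ, hτ, g₀, ⟨σ₀, hσ₀, rfl⟩, rfl⟩
    refine ⟨Fin.snoc σ₀ τ,
      Fin.lastCases (by simpa using hτ) (fun d => by simpa using hσ₀ d), ?_⟩
    rw [List.ofFn_succ']
    simp [List.concat_eq_append]

theorem existsUnique_mem_HD_mul_mem_fixingBelow {n D : ℕ} (hD : D ≤ n) (σ : Perm (Fin n)) :
    ∃! g, g ∈ HD n D ∧ g * σ ∈ fixingBelow n D := by
  induction D with
  | zero =>
    refine ⟨1, ⟨mem_HD_zero.mpr rfl, ?_⟩, fun g hg => mem_HD_zero.mp hg.1⟩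
    exact mem_fixingBelow.mpr fun _ hx => (Nat.not_lt_zero _ hx).elim
  | succ D ih =>
    obtain ⟨g₀, ⟨hg₀, hfix₀⟩, huniq₀⟩ := ih (by omega)
    have hD_le : D ≤ (g₀ * σ) ⟨D, hD⟩ := le_apply_of_mem_fixingBelow hfix₀ le_rfl
    obtain ⟨τ, hτ, hτx⟩ := exists_mem_zpowers_cyc_val_apply_eq hD_le
    refine ⟨τ * g₀, ⟨mem_HD_succ.mpr ⟨τ, hτ, g₀, hg₀, rfl⟩, ?_⟩, ?_⟩
    · rw [mul_assoc, mem_fixingBelow_succ hD]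
      exact ⟨mul_mem (zpowers_cyc_le_fixingBelow hτ) hfix₀, Fin.ext hτx⟩
    rintro g ⟨hg, hfix⟩
    obtain ⟨τ', hτ', g₁, hg₁, rfl⟩ := mem_HD_succ.mp hg
    rw [mul_assoc, mem_fixingBelow_succ hD] at hfix
    obtain rfl : g₁ = g₀ := huniq₀ g₁ ⟨hg₁, by
      simpa using mul_mem (inv_mem (zpowers_cyc_le_fixingBelow hτ')) hfix.1⟩
    rw [eq_of_mem_zpowers_cyc_of_apply_eq hτ' hτ hD_le (hfix.2.trans (Fin.ext hτx.symm))]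

/-- **`H_D` is a complete system of representatives of the left cosets of the
pointwise stabilizer of `{1, …, D}` in `S_n`:** every `σ ∈ S_n` can be written
uniquely as `σ = g⁻¹ * h` with `g ∈ H_D` and `h` fixing `1, …, D` pointwise. -/
theorem HD_coset_representatives (n D : ℕ) (hD : D ≤ n) (σ : Equiv.Perm (Fin n)) :
    ∃! gh : Equiv.Perm (Fin n) × Equiv.Perm (Fin n),
      gh.1 ∈ HD n D ∧
      (∀ d : Fin D, gh.2 (Fin.castLE hD d) = Fin.castLE hD d) ∧
      σ = gh.1⁻¹ * gh.2 := by
  have fixes_iff (h : Perm (Fin n)) :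
      h ∈ fixingBelow n D ↔ ∀ d : Fin D, h (Fin.castLE hD d) = Fin.castLE hD d :=
    mem_fixingBelow.trans ⟨fun hh d => hh _ d.isLt, fun hh x hx => hh ⟨x, hx⟩⟩
  obtain ⟨g, ⟨hg, hfix⟩, huniq⟩ := existsUnique_mem_HD_mul_mem_fixingBelow hD σ
  refine ⟨(g, g * σ), ⟨hg, (fixes_iff _).mp hfix, by group⟩, ?_⟩
  rintro ⟨g', h'⟩ ⟨hg', hh', rfl⟩
  obtain rfl : g' = g := huniq g' ⟨hg', by simpa [fixes_iff] using hh'⟩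
  simp
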